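/- The lattice of Lawvere–Tierney topologies on the topos of graphs is isomorphic to the four-element Boolean algebra. -/

import Mathlib

/-- A directed graph: nodes, arcs, source and target maps. -/
structure Graph' where
  N : Type
  A : Type
  src : A → N
  tgt : A → N

/-- A graph morphism. -/
@[ext]
structure Hom (G H : Graph') where
  fN : G.N → H.N
  fA : G.A → H.A
  hsrc : ∀ a, H.src (fA a) = fN (G.src a)
  htgt : ∀ a, H.tgt (fA a) = fN (G.tgt a)

/-- Composition of graph morphisms. -/
def Hom.comp {G H K : Graph'} (g : Hom H K) (f : Hom G H) : Hom G K where
  fN := g.fN ∘ f.fN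
  fA := g.fA ∘ f.fA
  hsrc a := by simp [g.hsrc, f.hsrc]
  htgt a := by simp [g.htgt, f.htgt]

/-- The arcs of the subobject classifier of graphs. -/
inductive OmegaA | zero | s | t | st | top
deriving DecidableEq

/-- The subobject classifier graph `Ω`: nodes are `Bool` (`true` = "in",
`false` = "out"); arcs `0_A : out→out`, `s : in→out`, `t : out→in`,
`st : in→in`, `A : in→in`. -/
def Omega : Graph' where
  N := Bool
  A := OmegaA
  src a := match a with
    | .zero => false | .s => true | .t => false | .st => true | .top => true
  tgt a := match a with
    | .zero => false | .s => false | .t => true | .st => true | .top => true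

/-- A subgraph of `G`, given by a set of nodes and a set of arcs whose
endpoints belong to the node set. -/
def IsSubgraph (G : Graph') (SN : Set G.N) (SA : Set G.A) : Prop :=
  ∀ a ∈ SA, G.src a ∈ SN ∧ G.tgt a ∈ SN

/-- `χ : G → Ω` classifies the subgraph `(SN, SA)`: the subgraph is the pullback
of `⊤ : 1 → Ω` (picking the node `true` and the arc `top`) along `χ`. -/
def Classifies {G : Graph'} (χ : Hom G Omega) (SN : Set G.N) (SA : Set G.A) : Prop :=
  (∀ n, n ∈ SN ↔ χ.fN n = true) ∧ (∀ a, a ∈ SA ↔ χ.fA a = OmegaA.top)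

/-- The order on the arcs of `Ω`: `0_A < s, t < st < A` with `s, t` incomparable. -/
def leA : OmegaA → OmegaA → Prop := fun x y =>
  x = y ∨ x = OmegaA.zero ∨ y = OmegaA.top ∨ (x ≠ OmegaA.top ∧ y = OmegaA.st)

/-- The meet on the arcs of `Ω` with respect to the order
`0_A < s, t < st < A` (`s`, `t` incomparable). -/
def meetA : OmegaA → OmegaA → OmegaA
  | .top, x => x
  | x, .top => x
  | .zero, _ => .zero
  | _, .zero => .zero
  | .st, x => x
  | x, .st => x
  | .s, .s => .s
  | .t, .t => .t
  | .s, .t => .zero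
  | .t, .s => .zero

/-- A Lawvere–Tierney topology on the topos of graphs, described concretely as a
graph endomorphism of `Ω` preserving truth and conjunction and idempotent. -/
def IsTopology (j : Hom Omega Omega) : Prop :=
  (j.fN true = true ∧ j.fA OmegaA.top = OmegaA.top) ∧
  (∀ n, j.fN (j.fN n) = j.fN n) ∧ (∀ a, j.fA (j.fA a) = j.fA a) ∧
  (∀ n m, j.fN (n && m) = (j.fN n && j.fN m)) ∧
  (∀ a b, j.fA (meetA a b) = meetA (j.fA a) (j.fA b))

/-- The identity topology. -/
def idTop : Hom Omega Omega := ⟨id, id, fun _ => rfl, fun _ => rfl⟩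

/-- The constant-true topology `⊤ ∘ !`. -/
def trueTop : Hom Omega Omega where
  fN _ := true
  fA _ := OmegaA.top
  hsrc a := by cases a <;> rfl
  htgt a := by cases a <;> rfl

/-- The double negation topology. -/
def negnegTop : Hom Omega Omega where
  fN n := n
  fA a := match a with
    | .st => .top | .top => .top | .zero => .zero | .s => .s | .t => .t
  hsrc a := by cases a <;> rfl
  htgt a := by cases a <;> rfl

/-- The closed topology for the global element `st`. -/
def closedTop : Hom Omega Omega where
  fN _ := true
  fA a := match a with
    | .top => .top | _ => .st
  hsrc a := by cases a <;> rfl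
  htgt a := by cases a <;> rfl

/-- The pointwise order on maps `Ω → Ω` induced by the internal order of `Ω`
(on nodes `false < true`, on arcs the order `0_A < s, t < st < A`). -/
def topLE (j k : Hom Omega Omega) : Prop :=
  (∀ n : Bool, j.fN n = true → k.fN n = true) ∧ (∀ a, leA (j.fA a) (k.fA a))

/-! A topology `j` is pinned down by `j(out)` and by where it sends the five arcs of `Ω`, and
being a graph map already constrains the arcs by their endpoints. If `j(out) = out`, then `j`
fixes `0_A`, `s`, `t` and sends `st` to `st` or `A`: the identity or `¬¬`. If `j(out) = in`,
every arc lands on a loop at `in`, i.e. on `st` or `A`. Since `0_A` is the bottom arc and `j`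
preserves meets, `j(0_A) = A` forces `j` to be constantly true; otherwise idempotence gives
`j(st) = st`, and every arc below `st` is sent to `st`: the closed topology. The two bits
`j(st) = A` and `j(out) = in` then identify the four topologies with `Bool × Bool`, and the
order can be compared case by case. -/

namespace Omega

lemma forall_arc {P : Omega.A → Prop} :
    (∀ a, P a) ↔ P OmegaA.zero ∧ P OmegaA.s ∧ P OmegaA.t ∧ P OmegaA.st ∧ P OmegaA.top :=
  ⟨fun h => ⟨h _, h _, h _, h _, h _⟩, fun ⟨_, _, _, _, _⟩ a => by cases a <;> assumption⟩

lemma arc_eq_zero {x : OmegaA} (hs : Omega.src x = false) (ht : Omega.tgt x = false) :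
    x = .zero := by
  cases x <;> simp_all [Omega]

lemma arc_eq_s {x : OmegaA} (hs : Omega.src x = true) (ht : Omega.tgt x = false) :
    x = .s := by
  cases x <;> simp_all [Omega]

lemma arc_eq_t {x : OmegaA} (hs : Omega.src x = false) (ht : Omega.tgt x = true) :
    x = .t := by
  cases x <;> simp_all [Omega]

lemma arc_eq_st_or_top {x : OmegaA} (hs : Omega.src x = true) (ht : Omega.tgt x = true) :
    x = .st ∨ x = .top := by
  cases x <;> simp_all [Omega]

end Omega

lemma meetA_zero_left (a : OmegaA) : meetA .zero a = .zero := by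
  cases a <;> rfl

lemma Hom.eq_idTop_or_negnegTop {j : Hom Omega Omega} (hin : j.fN true = true)
    (hout : j.fN false = false) (htop : j.fA .top = .top) : j = idTop ∨ j = negnegTop := by
  have hzero : j.fA .zero = .zero :=
    Omega.arc_eq_zero ((j.hsrc _).trans hout) ((j.htgt _).trans hout)
  have hs : j.fA .s = .s := Omega.arc_eq_s ((j.hsrc _).trans hin) ((j.htgt _).trans hout)
  have ht : j.fA .t = .t := Omega.arc_eq_t ((j.hsrc _).trans hout) ((j.htgt _).trans hin)
  have hN : j.fN = id := funext fun b => by cases b <;> assumption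
  rcases Omega.arc_eq_st_or_top ((j.hsrc .st).trans hin) ((j.htgt .st).trans hin) with hst | hst
  · exact .inl (Hom.ext hN (funext fun a => by cases a <;> assumption))
  · exact .inr (Hom.ext hN (funext fun a => by cases a <;> assumption))

namespace IsTopology

variable {j : Hom Omega Omega}

lemma eq_closedTop_or_trueTop (hj : IsTopology j) (hout : j.fN false = true) :
    j = closedTop ∨ j = trueTop := by
  have hN : j.fN = fun _ => true := funext fun b => by cases b; exacts [hout, hj.1.1]
  have hloop (a : OmegaA) : j.fA a = .st ∨ j.fA a = .top :=
    Omega.arc_eq_st_or_top ((j.hsrc a).trans (congrFun hN _)) ((j.htgt a).trans (congrFun hN _))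
  have hmeet : ∀ a b, j.fA (meetA a b) = meetA (j.fA a) (j.fA b) := hj.2.2.2.2
  rcases hloop .zero with hzero | hzero
  · left
    have hst : j.fA .st = .st := by simpa [hzero] using hj.2.2.1 .zero
    -- an arc `a ≤ st` is sent below `j(st) = st`, and the only loop at `in` below `st` is `st`
    have below_st (a : OmegaA) (ha : meetA a .st = a) : j.fA a = .st := by
      have h := hmeet a .st
      rw [ha, hst] at h
      rcases hloop a with h' | h'
      · exact h'
      · simp [h', meetA] at h
    refine Hom.ext hN (funext fun a => ?_)
    cases a
    case top => exact hj.1.2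
    all_goals exact below_st _ rfl
  · right
    refine Hom.ext hN (funext fun (a : OmegaA) => ?_)
    have h := hmeet .zero a
    rw [meetA_zero_left, hzero] at h
    exact h.symm

lemma eq_idTop_or_negnegTop_or_closedTop_or_trueTop (hj : IsTopology j) :
    j = idTop ∨ j = negnegTop ∨ j = closedTop ∨ j = trueTop := by
  cases hout : j.fN false
  · rcases Hom.eq_idTop_or_negnegTop hj.1.1 hout hj.1.2 with h | h <;> simp [h]
  · rcases hj.eq_closedTop_or_trueTop hout with h | h <;> simp [h]

end IsTopology

lemma isTopology_idTop : IsTopology idTop :=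
  ⟨⟨rfl, rfl⟩, fun _ => rfl, fun _ => rfl, fun _ _ => rfl, fun _ _ => rfl⟩

lemma isTopology_negnegTop : IsTopology negnegTop :=
  ⟨⟨rfl, rfl⟩, fun _ => rfl, fun a => by cases a <;> rfl, fun _ _ => rfl,
    fun a b => by cases a <;> cases b <;> rfl⟩

lemma isTopology_closedTop : IsTopology closedTop :=
  ⟨⟨rfl, rfl⟩, fun _ => rfl, fun a => by cases a <;> rfl, fun _ _ => rfl,
    fun a b => by cases a <;> cases b <;> rfl⟩

lemma isTopology_trueTop : IsTopology trueTop :=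
  ⟨⟨rfl, rfl⟩, fun _ => rfl, fun _ => rfl, fun _ _ => rfl, fun _ _ => rfl⟩

def topologyOfCode : Bool × Bool → {j : Hom Omega Omega // IsTopology j}
  | (false, false) => ⟨idTop, isTopology_idTop⟩
  | (true, false) => ⟨negnegTop, isTopology_negnegTop⟩
  | (false, true) => ⟨closedTop, isTopology_closedTop⟩
  | (true, true) => ⟨trueTop, isTopology_trueTop⟩

lemma topLE_refl (j : Hom Omega Omega) : topLE j j :=
  ⟨fun _ h => h, fun _ => .inl rfl⟩

lemma topLE_topologyOfCode_iff (p q : Bool × Bool) :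
    topLE (topologyOfCode p).val (topologyOfCode q).val ↔ p ≤ q := by
  rcases p with ⟨_ | _, _ | _⟩ <;> rcases q with ⟨_ | _, _ | _⟩ <;>
    simp [topologyOfCode, topLE, Omega.forall_arc, Bool.forall_bool, leA, id,
      idTop, negnegTop, closedTop, trueTop]

lemma topologyOfCode_injective : Function.Injective topologyOfCode := fun p q h =>
  le_antisymm ((topLE_topologyOfCode_iff p q).1 (h ▸ topLE_refl _))
    ((topLE_topologyOfCode_iff q p).1 (h ▸ topLE_refl _))

lemma topologyOfCode_surjective : Function.Surjective topologyOfCode := by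
  rintro ⟨j, hj⟩
  rcases hj.eq_idTop_or_negnegTop_or_closedTop_or_trueTop with rfl | rfl | rfl | rfl
  exacts [⟨(false, false), rfl⟩, ⟨(true, false), rfl⟩, ⟨(false, true), rfl⟩, ⟨(true, true), rfl⟩]

/-- the lattice of Lawvere–Tierney topologies on the topos of
graphs is isomorphic to the four-element Boolean algebra `Bool × Bool`. -/
theorem topologies_lattice :
    ∃ e : {j : Hom Omega Omega // IsTopology j} ≃ Bool × Bool,
      ∀ j k : {j : Hom Omega Omega // IsTopology j},
        topLE j.val k.val ↔ e j ≤ e k := by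
  have hbij : Function.Bijective topologyOfCode :=
    ⟨topologyOfCode_injective, topologyOfCode_surjective⟩
  refine ⟨(Equiv.ofBijective _ hbij).symm, fun j k => ?_⟩
  obtain ⟨p, rfl⟩ := hbij.2 j
  obtain ⟨q, rfl⟩ := hbij.2 k
  rw [Equiv.ofBijective_symm_apply_apply, Equiv.ofBijective_symm_apply_apply]
  exact topLE_topologyOfCode_iff p q
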